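/- Symmetry of the Igusa cusp form in q and q̃: the formal series χ₁₀ = p q q̃ · ∏_{(k,h,d)} (1 − p^k q^h q̃^d)^{c(4hd − k²)} ∈ A[[q, q̃]], where the product runs over all k ∈ ℤ and h, d ≥ 0 with either (h > 0 or d > 0), or (h = d = 0 and k < 0), is invariant under the continuous A-algebra automorphism of A[[q, q̃]] that exchanges q and q̃; i.e. χ₁₀(p, q, q̃) = χ₁₀(p, q̃, q). -/

import Mathlib

noncomputable section

/-- The coefficient field `A = ℚ((p))` of formal Laurent series in `p`. -/
abbrev A : Type := LaurentSeries ℚ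

/-- The Laurent variable `p ∈ A`. -/
def pL : A := HahnSeries.single 1 1

instance : TopologicalSpace A := ⊥

/-- The product (pi) topology on `R = A⟦q⟧`, coefficientwise. -/
instance : TopologicalSpace (PowerSeries A) :=
  inferInstanceAs (TopologicalSpace ((Unit →₀ ℕ) → A))

/-- `Fsq`, the formal expansion in `A⟦q⟧` of the square of the Jacobi theta quotient
`F = ϑ₁(z,τ)/η(τ)³` in the region `0 < |q| < |p| < 1`:
`Fsq = −(p − 2 + p⁻¹) ∏_{m ≥ 1} (1 − p q^m)²(1 − p⁻¹ q^m)²(1 − q^m)^{−4}`. -/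
def Fsq : PowerSeries A :=
  -(PowerSeries.C (pL - 2 + pL⁻¹)) *
    ∏' m : ℕ,
      ((1 - PowerSeries.C pL * PowerSeries.X ^ (m + 1)) ^ 2 *
       (1 - PowerSeries.C pL⁻¹ * PowerSeries.X ^ (m + 1)) ^ 2 *
       Ring.inverse ((1 - (PowerSeries.X : PowerSeries A) ^ (m + 1)) ^ 4))

/-- `∑_{k ≥ 1} k p^k ∈ A`, the expansion of `p/(1−p)²`. -/
def sumkpk : A := HahnSeries.ofPowerSeries ℤ ℚ (PowerSeries.mk fun k => (k : ℚ))

/-- The Weierstrass expansion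
`℘ = 1/12 + ∑_{k ≥ 1} k p^k + ∑_{k,r ≥ 1} k (p^k − 2 + p^{−k}) q^{kr} ∈ A⟦q⟧`. -/
def wp : PowerSeries A :=
  PowerSeries.C (1 / 12 + sumkpk) +
    ∑' kr : ℕ × ℕ,
      PowerSeries.C (((kr.1 + 1 : ℕ) : A) * (pL ^ (kr.1 + 1) - 2 + (pL⁻¹) ^ (kr.1 + 1))) *
        PowerSeries.X ^ ((kr.1 + 1) * (kr.2 + 1))

/-- `Z = −24·℘·Fsq ∈ A⟦q⟧`. -/
def Zjac : PowerSeries A := -24 * wp * Fsq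

/-- The product (pi) topology on `A⟦q⟧⟦q̃⟧`, coefficientwise. -/
instance : TopologicalSpace (PowerSeries (PowerSeries A)) :=
  inferInstanceAs (TopologicalSpace ((Unit →₀ ℕ) → PowerSeries A))

/-- Integer power in a ring (for invertible bases): `x^n` for `n ≥ 0`, and
`(x^{−n})⁻¹` (via `Ring.inverse`) for `n < 0`. -/
def fpow {R : Type*} [CommRing R] (x : R) (n : ℤ) : R :=
  if 0 ≤ n then x ^ n.toNat else Ring.inverse (x ^ (-n).toNat)

/-- The index set of the product defining `χ₁₀`: all `(k,h,d) ∈ ℤ × ℕ × ℕ` with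
`h > 0` or `d > 0`, or `h = d = 0` and `k < 0`. -/
def chiIndex : Set (ℤ × ℕ × ℕ) :=
  {x | 0 < x.2.1 ∨ 0 < x.2.2 ∨ (x.2.1 = 0 ∧ x.2.2 = 0 ∧ x.1 < 0)}

/-- The Igusa cusp form, as the Borcherds-type product
`χ₁₀ = p q q̃ ∏_{(k,h,d)} (1 − p^k q^h q̃^d)^{c(4hd − k²)} ∈ A⟦q,q̃⟧ = A⟦q⟧⟦q̃⟧`,
the product over all `k ∈ ℤ`, `h,d ≥ 0` with (`h > 0` or `d > 0`) or
(`h = d = 0` and `k < 0`). -/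
def chi10 (c : ℤ → ℤ) : PowerSeries (PowerSeries A) :=
  PowerSeries.C (PowerSeries.C pL * PowerSeries.X) * PowerSeries.X *
    ∏' i : chiIndex,
      fpow
        (1 - PowerSeries.C (PowerSeries.C (pL ^ (i.1.1 : ℤ)) *
              PowerSeries.X ^ i.1.2.1) * PowerSeries.X ^ i.1.2.2)
        (c (4 * (i.1.2.1 : ℤ) * (i.1.2.2 : ℤ) - (i.1.1) ^ 2))


/-!
Exchanging `q` and `q̃` is a ring automorphism of `A⟦q⟧⟦q̃⟧` that is continuous for the
coefficientwise topology, and so is its inverse (itself), hence it commutes with infinite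
products. It fixes the prefactor `p q q̃` and sends the factor indexed by `(k, h, d)` to the one
indexed by `(k, d, h)`, whose exponent `c(4dh − k²)` is the same; since the index set is stable
under `h ↔ d`, the product is unchanged.
-/

theorem MulEquiv.map_ringInverse {M N : Type*} [MonoidWithZero M] [MonoidWithZero N] (e : M ≃* N)
    (x : M) : e (Ring.inverse x) = Ring.inverse (e x) := by
  by_cases hx : IsUnit x
  · obtain ⟨u, rfl⟩ := hx
    have hu : e u = (Units.map (e : M →* N) u : N) := rfl
    rw [hu, Ring.inverse_unit, Ring.inverse_unit]
    simp
  · have hex : ¬IsUnit (e x) := by rwa [isUnit_map_iff]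
    rw [Ring.inverse_non_unit x hx, Ring.inverse_non_unit _ hex, map_zero]

theorem RingEquiv.map_fpow {R S : Type*} [CommRing R] [CommRing S] (e : R ≃+* S) (x : R)
    (n : ℤ) : e (fpow x n) = fpow (e x) n := by
  unfold fpow
  split_ifs
  · exact map_pow e x _
  · rw [← map_pow e x]
    exact e.toMulEquiv.map_ringInverse _

namespace PowerSeries

variable {R : Type*}

section Semiring

variable [Semiring R]

theorem coeff_coeff_C_mul_X_pow (g : R) (h d a b : ℕ) :
    coeff a (coeff b (C (C g * X ^ h) * X ^ d : R⟦X⟧⟦X⟧)) =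
      if a = h ∧ b = d then g else 0 := by
  rw [coeff_C_mul_X_pow, apply_ite (coeff a), map_zero, coeff_C_mul_X_pow]
  split_ifs <;> tauto

theorem ext_coeff_coeff {f g : R⟦X⟧⟦X⟧} (h : ∀ a b, coeff a (coeff b f) = coeff a (coeff b g)) :
    f = g :=
  ext fun b => ext fun a => h a b

variable (R) in
def swap : R⟦X⟧⟦X⟧ ≃+* R⟦X⟧⟦X⟧ where
  toFun f := mk fun b => mk fun a => coeff b (coeff a f)
  invFun f := mk fun b => mk fun a => coeff b (coeff a f)
  left_inv f := by ext; simp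
  right_inv f := by ext; simp
  map_add' f g := by ext; simp
  map_mul' f g := ext_coeff_coeff fun a b => by
    simp only [coeff_mk, coeff_mul, map_sum]
    exact Finset.sum_comm

@[simp]
theorem coeff_coeff_swap (f : R⟦X⟧⟦X⟧) (a b : ℕ) :
    coeff a (coeff b (swap R f)) = coeff b (coeff a f) := by
  simp [swap]

@[simp]
theorem swap_swap (f : R⟦X⟧⟦X⟧) : swap R (swap R f) = f :=
  ext_coeff_coeff fun a b => by simp

theorem swap_C_mul_X_pow (g : R) (h d : ℕ) :
    swap R (C (C g * X ^ h) * X ^ d) = C (C g * X ^ d) * X ^ h :=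
  ext_coeff_coeff fun a b => by
    simp only [coeff_coeff_swap, coeff_coeff_C_mul_X_pow]
    exact if_congr and_comm rfl rfl

end Semiring

open WithPiTopology in
theorem continuous_swap [Semiring R] [TopologicalSpace R] : Continuous (swap R) :=
  continuous_pi fun s => continuous_pi fun t =>
    (continuous_apply (Finsupp.single () (s ()))).comp
      (continuous_apply (Finsupp.single () (t ())))

open WithPiTopology in
theorem swap_tprod [CommSemiring R] [TopologicalSpace R] [T2Space R] {ι : Type*}
    (f : ι → R⟦X⟧⟦X⟧) : swap R (∏' i, f i) = ∏' i, swap R (f i) :=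
  Function.LeftInverse.map_tprod f continuous_swap continuous_swap swap_swap

end PowerSeries

def chiIndexSwap : chiIndex ≃ chiIndex :=
  ((Equiv.refl ℤ).prodCongr (Equiv.prodComm ℕ ℕ)).subtypeEquiv fun x => by
    simp only [chiIndex, Set.mem_ofPred_eq]
    tauto

open PowerSeries

def chi10Factor (c : ℤ → ℤ) (i : ℤ × ℕ × ℕ) : A⟦X⟧⟦X⟧ :=
  fpow (1 - C (C (pL ^ i.1) * X ^ i.2.1) * X ^ i.2.2) (c (4 * i.2.1 * i.2.2 - i.1 ^ 2))

theorem swap_chi10Factor (c : ℤ → ℤ) (k : ℤ) (h d : ℕ) :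
    swap A (chi10Factor c (k, h, d)) = chi10Factor c (k, d, h) := by
  simp only [chi10Factor, RingEquiv.map_fpow, map_sub, map_one, swap_C_mul_X_pow, mul_right_comm]

theorem swap_chi10 (c : ℤ → ℤ) : swap A (chi10 c) = chi10 c := by
  have : DiscreteTopology A := ⟨rfl⟩
  have prefactor : swap A (C (C pL * X) * X) = C (C pL * X) * X := by
    simpa using swap_C_mul_X_pow pL 1 1
  change swap A (_ * ∏' i : chiIndex, chi10Factor c i) = _ * ∏' i : chiIndex, chi10Factor c i
  rw [map_mul, prefactor]
  congr 1
  -- The topologies fixed on `A⟦q⟧` and `A⟦q⟧⟦q̃⟧` are definitionally those of `WithPiTopology`.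
  calc swap A (∏' i : chiIndex, chi10Factor c i)
      = ∏' i : chiIndex, chi10Factor c (chiIndexSwap i) :=
        (swap_tprod _).trans (tprod_congr fun i => swap_chi10Factor c _ _ _)
    _ = ∏' i : chiIndex, chi10Factor c i := chiIndexSwap.tprod_eq fun i => chi10Factor c i

theorem chi10_symmetric_general (c : ℤ → ℤ) :
    ∀ a b : ℕ,
      PowerSeries.coeff a (PowerSeries.coeff b (chi10 c)) =
      PowerSeries.coeff b (PowerSeries.coeff a (chi10 c)) := by
  intro a b
  rw [← coeff_coeff_swap, swap_chi10]

/-- Symmetry of the Igusa cusp form in `q` and `q̃`: `χ₁₀(p,q,q̃) = χ₁₀(p,q̃,q)`,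
i.e. the `q^a q̃^b` coefficient equals the `q^b q̃^a` coefficient. -/
theorem chi10_symmetric (c : ℤ → ℤ)
    (hc0 : ∀ m : ℤ, m < -1 → c m = 0)
    (hc : ∀ n : ℕ, ∀ k : ℤ, (PowerSeries.coeff n Zjac).coeff k = ((c (4 * n - k ^ 2) : ℤ) : ℚ)) :
    ∀ a b : ℕ,
      PowerSeries.coeff a (PowerSeries.coeff b (chi10 c)) =
      PowerSeries.coeff b (PowerSeries.coeff a (chi10 c)) :=
  chi10_symmetric_general c

end
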